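/- arXiv:0908.1264 — 6 statements merged into one kernel-verified Lean document; each statement's English description precedes it below -/
import Mathlib

section
/- Let λ > 0, σ_z² > 0, θ > 0 and μ̂ > 0 be real numbers. Define Δ = λ² μ̂² σ_z⁴ + 4 λ μ̂² θ σ_z² + 4 θ² μ̂ λ σ_z² and P_d = max(0, (−λ σ_z² (2θ + μ̂) + √Δ)/(2 λ θ (μ̂ + θ))). Then P_d is a global maximizer over P ∈ [0, ∞) of the function P ↦ log(1 + P μ̂/(P θ + σ_z²)) − λ P. -/
/-!
For `P ≥ 0` the derivative of `P ↦ log(1 + Pμ/(Pθ + σ)) - λP` is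
`-q(P) / ((Pθ + σ)(P(θ + μ) + σ))` with `q(P) = λ(Pθ + σ)(P(θ + μ) + σ) - μσ`.
The discriminant of `q` is `Δ`, its smaller root is negative, and its larger root is the
unclipped `P_d`; so on `[0, ∞)` the objective increases up to `P_d` and decreases afterwards.
-/

open Set

theorem isMaxOn_Ici_of_deriv_nonneg_of_deriv_nonpos {f : ℝ → ℝ} {a p : ℝ} (hap : a ≤ p)
    (hf : ContinuousOn f (Ici a)) (hf' : DifferentiableOn ℝ f (Ioi a))
    (hleft : ∀ x ∈ Ioo a p, 0 ≤ deriv f x) (hright : ∀ x ∈ Ioi p, deriv f x ≤ 0) :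
    IsMaxOn f (Ici a) p := by
  have hmono : MonotoneOn f (Icc a p) :=
    monotoneOn_of_deriv_nonneg (convex_Icc a p) (hf.mono Icc_subset_Ici_self)
      (hf'.mono (by rw [interior_Icc]; exact Ioo_subset_Ioi_self)) (by rwa [interior_Icc])
  have hanti : AntitoneOn f (Ici p) :=
    antitoneOn_of_deriv_nonpos (convex_Ici p) (hf.mono (Ici_subset_Ici.2 hap))
      (hf'.mono (by rw [interior_Ici]; exact Ioi_subset_Ioi hap)) (by rwa [interior_Ici])
  intro x (hx : a ≤ x)
  rcases le_total x p with hxp | hpx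
  · exact hmono ⟨hx, hxp⟩ ⟨hap, le_rfl⟩ hxp
  · exact hanti (mem_Ici.2 le_rfl) hpx hpx

section Quadratic

variable {a b c s : ℝ}

theorem quadratic_eq_mul_sub_mul_sub (ha : a ≠ 0) (hs : discrim a b c = s * s) (x : ℝ) :
    a * x ^ 2 + b * x + c = a * ((x - (-b + s) / (2 * a)) * (x - (-b - s) / (2 * a))) := by
  rw [discrim] at hs
  field_simp
  linear_combination (-1 : ℝ) * hs

theorem quadratic_nonpos_of_le_root (ha : 0 < a) (hb : 0 ≤ b) (hs₀ : 0 ≤ s)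
    (hs : discrim a b c = s * s) {x : ℝ} (hx₀ : 0 ≤ x) (hx : x ≤ (-b + s) / (2 * a)) :
    a * x ^ 2 + b * x + c ≤ 0 := by
  have hroot : (-b - s) / (2 * a) ≤ x :=
    (div_nonpos_of_nonpos_of_nonneg (by linarith) (by linarith)).trans hx₀
  rw [quadratic_eq_mul_sub_mul_sub ha.ne' hs]
  exact mul_nonpos_of_nonneg_of_nonpos ha.le
    (mul_nonpos_of_nonpos_of_nonneg (by linarith) (by linarith))

theorem quadratic_nonneg_of_root_le (ha : 0 < a) (hs₀ : 0 ≤ s) (hs : discrim a b c = s * s)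
    {x : ℝ} (hx : (-b + s) / (2 * a) ≤ x) : 0 ≤ a * x ^ 2 + b * x + c := by
  have hroots : (-b - s) / (2 * a) ≤ (-b + s) / (2 * a) := by gcongr; linarith
  rw [quadratic_eq_mul_sub_mul_sub ha.ne' hs]
  exact mul_nonneg ha.le (mul_nonneg (by linarith) (by linarith))

end Quadratic

theorem hasDerivAt_log_one_add_div_sub_mul {lam σ θ μ P : ℝ} (hσ : 0 < σ) (hθ : 0 ≤ θ)
    (hμ : 0 ≤ μ) (hP : 0 ≤ P) :
    HasDerivAt (fun x => Real.log (1 + x * μ / (x * θ + σ)) - lam * x)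
      (-(lam * θ * (μ + θ) * P ^ 2 + lam * σ * (2 * θ + μ) * P + (lam * σ ^ 2 - μ * σ)) /
        ((P * θ + σ) * (P * (θ + μ) + σ))) P := by
  have hden : 0 < P * θ + σ := by positivity
  have hden' : 0 < P * (θ + μ) + σ := by positivity
  have hratio : HasDerivAt (fun x => 1 + x * μ / (x * θ + σ))
      ((1 * μ * (P * θ + σ) - P * μ * (1 * θ)) / (P * θ + σ) ^ 2) P :=
    (((hasDerivAt_id P).mul_const μ).div
      (((hasDerivAt_id P).mul_const θ).add_const σ) hden.ne').const_add 1
  refine ((hratio.log (by positivity)).sub ((hasDerivAt_id P).const_mul lam)).congr_deriv ?_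
  field_simp
  ring

theorem isMaxOn_log_one_add_div_sub_mul {lam σ θ μ s : ℝ} (hlam : 0 < lam) (hσ : 0 < σ)
    (hθ : 0 < θ) (hμ : 0 ≤ μ) (hs₀ : 0 ≤ s)
    (hs : discrim (lam * θ * (μ + θ)) (lam * σ * (2 * θ + μ)) (lam * σ ^ 2 - μ * σ) = s * s) :
    IsMaxOn (fun x => Real.log (1 + x * μ / (x * θ + σ)) - lam * x) (Ici 0)
      (max 0 ((-(lam * σ * (2 * θ + μ)) + s) / (2 * (lam * θ * (μ + θ))))) := by
  set a := lam * θ * (μ + θ)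
  set b := lam * σ * (2 * θ + μ)
  set p := max 0 ((-b + s) / (2 * a))
  have hp₀ : 0 ≤ p := le_max_left _ _
  have hderiv (x : ℝ) (hx : 0 ≤ x) :=
    hasDerivAt_log_one_add_div_sub_mul (lam := lam) hσ hθ.le hμ hx
  refine isMaxOn_Ici_of_deriv_nonneg_of_deriv_nonpos hp₀
    (fun x hx => (hderiv x hx).continuousAt.continuousWithinAt)
    (fun x hx => (hderiv x hx.le).differentiableAt.differentiableWithinAt)
    (fun x hx => ?_) (fun x hx => ?_)
  · have hx₀ : 0 ≤ x := hx.1.le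
    rw [(hderiv x hx₀).deriv]
    refine div_nonneg (neg_nonneg.2 ?_) (by positivity)
    exact quadratic_nonpos_of_le_root (by positivity) (by positivity) hs₀ hs hx₀
      ((lt_max_iff.1 hx.2).resolve_left hx.1.not_gt).le
  · have hx₀ : 0 ≤ x := hp₀.trans hx.le
    rw [(hderiv x hx₀).deriv]
    refine div_nonpos_of_nonpos_of_nonneg (neg_nonpos.2 ?_) (by positivity)
    exact quadratic_nonneg_of_root_le (by positivity) hs₀ hs ((le_max_right _ _).trans hx.le)

/-- The water-filling data power allocation P_d globally maximizes
P ↦ log(1 + Pμ̂/(Pθ + σ_z²)) − λP over P ∈ [0, ∞). -/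
theorem stmt1 (lam σz2 θ μ Δ Pd : ℝ)
    (hlam : 0 < lam) (hσz : 0 < σz2) (hθ : 0 < θ) (hμ : 0 < μ)
    (hΔ : Δ = lam ^ 2 * μ ^ 2 * σz2 ^ 2 + 4 * lam * μ ^ 2 * θ * σz2
      + 4 * θ ^ 2 * μ * lam * σz2)
    (hPd : Pd = max 0 ((-(lam * σz2 * (2 * θ + μ)) + Real.sqrt Δ)
      / (2 * lam * θ * (μ + θ)))) :
    0 ≤ Pd ∧ ∀ P : ℝ, 0 ≤ P →
      Real.log (1 + P * μ / (P * θ + σz2)) - lam * P ≤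
      Real.log (1 + Pd * μ / (Pd * θ + σz2)) - lam * Pd := by
  have hdisc : discrim (lam * θ * (μ + θ)) (lam * σz2 * (2 * θ + μ)) (lam * σz2 ^ 2 - μ * σz2) =
      √Δ * √Δ := by
    rw [Real.mul_self_sqrt (by rw [hΔ]; positivity), hΔ, discrim]
    ring
  have hmax := isMaxOn_log_one_add_div_sub_mul hlam hσz hθ hμ.le (Real.sqrt_nonneg Δ) hdisc
  rw [← mul_assoc, ← mul_assoc, ← hPd] at hmax
  exact ⟨hPd ▸ le_max_left _ _, fun P hP => isMaxOn_iff.1 hmax P hP⟩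
end

section
/- Let λ > 0, σ_z² > 0, θ > 0 and μ̂ > 0 be real numbers, let Δ = λ² μ̂² σ_z⁴ + 4 λ μ̂² θ σ_z² + 4 θ² μ̂ λ σ_z², and let P_d = max(0, (−λ σ_z² (2θ + μ̂) + √Δ)/(2 λ θ (μ̂ + θ))). Then P_d > 0 if and only if μ̂ > λ σ_z². -/
/-! The positive root of the stationarity quadratic is `(-a + √Δ) / d` with `a ≥ 0` and `d > 0`,
so it is positive exactly when `a² < Δ`; and `Δ - a²` factors as a positive constant times
`μ̂ - λσ_z²`. -/

lemma zero_lt_max_zero_neg_add_sqrt_div_iff {a Δ d : ℝ} (ha : 0 ≤ a) (hd : 0 < d) :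
    0 < max 0 ((-a + √Δ) / d) ↔ a ^ 2 < Δ := by
  rw [lt_max_iff, lt_self_iff_false, false_or, div_pos_iff_of_pos_right hd,
    lt_neg_add_iff_add_lt, add_zero, Real.lt_sqrt ha]

/-- The water-filling power P_d is strictly positive iff μ̂ > λσ_z². -/
theorem stmt2 (lam σz2 θ μ Δ Pd : ℝ)
    (hlam : 0 < lam) (hσz : 0 < σz2) (hθ : 0 < θ) (hμ : 0 < μ)
    (hΔ : Δ = lam ^ 2 * μ ^ 2 * σz2 ^ 2 + 4 * lam * μ ^ 2 * θ * σz2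
      + 4 * θ ^ 2 * μ * lam * σz2)
    (hPd : Pd = max 0 ((-(lam * σz2 * (2 * θ + μ)) + Real.sqrt Δ)
      / (2 * lam * θ * (μ + θ)))) :
    0 < Pd ↔ μ > lam * σz2 := by
  have discriminant_gap : Δ - (lam * σz2 * (2 * θ + μ)) ^ 2
      = 4 * lam * θ * σz2 * (μ + θ) * (μ - lam * σz2) := by
    rw [hΔ]; ring
  rw [hPd, zero_lt_max_zero_neg_add_sqrt_div_iff (by positivity) (by positivity), ← sub_pos,
    discriminant_gap, mul_pos_iff_of_pos_left (by positivity), sub_pos, gt_iff_lt]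
end

section
/- Let ρ > 0 and σ_h² > 0. Let θ_ε : ℝ → ℝ be differentiable and satisfy σ_h² − θ_ε(x) + x·θ_ε'(x) ≥ 0 for all x ≥ 0. Let μ̂, θ : ℝ → ℝ be differentiable with μ̂'(t) = −2ρ μ̂(t) and θ'(t) = 2ρ(σ_h² − θ(t)). If at some time t one has μ̂(t) > 0 and θ(t) < θ_ε(μ̂(t)), then the derivative of κ(s) = θ(s) − θ_ε(μ̂(s)) at s = t is strictly positive. -/
/-!
Along the zero-pilot flow, κ'(t) = 2ρ (σ_h² − θ + μ̂ θ_ε'(μ̂)), which splits as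
2ρ times the (P1) quantity σ_h² − θ_ε(μ̂) + μ̂ θ_ε'(μ̂) ≥ 0 plus the gap θ_ε(μ̂) − θ > 0.
-/

theorem deriv_sub_comp {f g μ : ℝ → ℝ} {t : ℝ} (hf : DifferentiableAt ℝ f t)
    (hμ : DifferentiableAt ℝ μ t) (hg : DifferentiableAt ℝ g (μ t)) :
    deriv (fun s => f s - g (μ s)) t = deriv f t - deriv g (μ t) * deriv μ t := by
  have hcomp : DifferentiableAt ℝ (fun s => g (μ s)) t := hg.comp t hμ
  rw [deriv_fun_sub hf hcomp, ← Function.comp_def g μ, deriv_comp t hg hμ]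

theorem stmt9_general (ρ σh2 : ℝ) (hρ : 0 < ρ)
    (θε : ℝ → ℝ) (hθε : Differentiable ℝ θε)
    (hP1 : ∀ x : ℝ, 0 ≤ x → 0 ≤ σh2 - θε x + x * deriv θε x)
    (μ θ : ℝ → ℝ) (hμdiff : Differentiable ℝ μ) (hθdiff : Differentiable ℝ θ)
    (hμ' : ∀ s, deriv μ s = -(2 * ρ * μ s))
    (hθ' : ∀ s, deriv θ s = 2 * ρ * (σh2 - θ s))
    (t : ℝ) (hpos : 0 < μ t) (hbelow : θ t < θε (μ t)) :
    0 < deriv (fun s => θ s - θε (μ s)) t := by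
  rw [deriv_sub_comp (hθdiff t) (hμdiff t) (hθε (μ t)), hθ', hμ']
  have hsplit : 2 * ρ * (σh2 - θ t) - deriv θε (μ t) * -(2 * ρ * μ t) =
      2 * ρ * ((σh2 - θε (μ t) + μ t * deriv θε (μ t)) + (θε (μ t) - θ t)) := by
    ring
  rw [hsplit]
  exact mul_pos (by positivity) (add_pos_of_nonneg_of_pos (hP1 (μ t) hpos.le) (sub_pos.mpr hbelow))

/-- Below the free boundary, under zero pilot power, the distance
κ(s) = θ(s) − θ_ε(μ̂(s)) to the free boundary has strictly positive derivative. -/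
theorem stmt9 (ρ σh2 : ℝ) (hρ : 0 < ρ) (hσh : 0 < σh2)
    (θε : ℝ → ℝ) (hθε : Differentiable ℝ θε)
    (hP1 : ∀ x : ℝ, 0 ≤ x → 0 ≤ σh2 - θε x + x * deriv θε x)
    (μ θ : ℝ → ℝ) (hμdiff : Differentiable ℝ μ) (hθdiff : Differentiable ℝ θ)
    (hμ' : ∀ s, deriv μ s = -(2 * ρ * μ s))
    (hθ' : ∀ s, deriv θ s = 2 * ρ * (σh2 - θ s))
    (t : ℝ) (hpos : 0 < μ t) (hbelow : θ t < θε (μ t)) :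
    0 < deriv (fun s => θ s - θε (μ s)) t :=
  stmt9_general ρ σh2 hρ θε hθε hP1 μ θ hμdiff hθdiff hμ' hθ' t hpos hbelow
end

section
/- Let σ_h² > 0 and let θ_ε : [0, ∞) → ℝ be continuous with 0 < θ_ε(u) < σ_h² for all u ≥ 0. Define f(u) = (1/(σ_h² − θ_ε(u))) · exp(−∫₀ᵘ 1/(σ_h² − θ_ε(s)) ds). Then for every a ≥ 0, ∫ₐ^∞ u f(u) du ≤ (a + σ_h²) · ∫ₐ^∞ f(u) du. -/
/-!
With hazard rate `g = 1 / (σ_h² - θ_ε)`, the density is `f = g · S` for the survival function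
`S u = exp (-∫₀ᵘ g)`, and `g ≥ c := σ_h⁻²`. Then `∫ₐ^∞ f = S a`, while
`u g S ≤ ((u + c⁻¹) g - 1) S = -((u + c⁻¹) S)'`, so `∫ₐ^∞ u f ≤ (a + c⁻¹) S a`.
-/

open MeasureTheory Filter Set Topology

noncomputable def hazardSurvival (g : ℝ → ℝ) (u : ℝ) : ℝ :=
  Real.exp (-∫ s in (0 : ℝ)..u, g s)

namespace hazardSurvival

variable {g : ℝ → ℝ} {c a : ℝ}

lemma pos (u : ℝ) : 0 < hazardSurvival g u := Real.exp_pos _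

lemma hasDerivAt (hg : Continuous g) (u : ℝ) :
    HasDerivAt (hazardSurvival g) (-(g u * hazardSurvival g u)) u := by
  have hF : HasDerivAt (fun u => ∫ s in (0 : ℝ)..u, g s) (g u) u :=
    intervalIntegral.integral_hasDerivAt_right (hg.intervalIntegrable 0 u)
      (hg.stronglyMeasurableAtFilter _ _) hg.continuousAt
  unfold hazardSurvival
  simpa [mul_comm] using hF.neg.exp

lemma le_exp_neg_mul (hg : Continuous g) (hc : ∀ s, 0 ≤ s → c ≤ g s) {u : ℝ} (hu : 0 ≤ u) :
    hazardSurvival g u ≤ Real.exp (-(c * u)) := by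
  have hF : ∫ _ in (0 : ℝ)..u, c ≤ ∫ s in (0 : ℝ)..u, g s :=
    intervalIntegral.integral_mono_on hu intervalIntegrable_const (hg.intervalIntegrable 0 u)
      fun s hs => hc s hs.1
  rw [intervalIntegral.integral_const, smul_eq_mul, sub_zero, mul_comm] at hF
  exact Real.exp_le_exp.mpr (neg_le_neg hF)

lemma tendsto_rpow_mul_atTop (hg : Continuous g) (hc0 : 0 < c) (hc : ∀ s, 0 ≤ s → c ≤ g s)
    (p : ℝ) : Tendsto (fun u => u ^ p * hazardSurvival g u) atTop (𝓝 0) := by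
  refine squeeze_zero' ?_ ?_ (tendsto_rpow_mul_exp_neg_mul_atTop_nhds_zero p c hc0)
  · filter_upwards [eventually_ge_atTop 0] with u hu
    exact mul_nonneg (Real.rpow_nonneg hu p) (pos u).le
  · filter_upwards [eventually_ge_atTop 0] with u hu
    rw [neg_mul]
    exact mul_le_mul_of_nonneg_left (le_exp_neg_mul hg hc hu) (Real.rpow_nonneg hu p)

lemma integral_Ioi_mul (hg : Continuous g) (hc0 : 0 < c) (hc : ∀ s, 0 ≤ s → c ≤ g s)
    (ha : 0 ≤ a) : ∫ u in Ioi a, g u * hazardSurvival g u = hazardSurvival g a := by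
  have hlim : Tendsto (fun u => -hazardSurvival g u) atTop (𝓝 0) := by
    simpa using (tendsto_rpow_mul_atTop hg hc0 hc 0).neg
  have hderiv : ∀ u ∈ Ici a,
      HasDerivAt (fun u => -hazardSurvival g u) (g u * hazardSurvival g u) u :=
    fun u _ => (hasDerivAt hg u).neg.congr_deriv (neg_neg _)
  have hnonneg : ∀ u ∈ Ioi a, 0 ≤ g u * hazardSurvival g u := fun u hu =>
    mul_nonneg (hc0.le.trans (hc u (ha.trans hu.out.le))) (pos u).le
  simpa using integral_Ioi_of_hasDerivAt_of_nonneg' hderiv hnonneg hlim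

lemma setIntegral_Ioi_id_mul_le (hg : Continuous g) (hc0 : 0 < c) (hc : ∀ s, 0 ≤ s → c ≤ g s)
    (ha : 0 ≤ a) :
    ∫ u in Ioi a, u * (g u * hazardSurvival g u) ≤ (a + c⁻¹) * hazardSurvival g a := by
  set D : ℝ → ℝ := fun u => ((u + c⁻¹) * g u - 1) * hazardSurvival g u
  have hone : ∀ u, 0 ≤ u → 1 ≤ c⁻¹ * g u := fun u hu => by
    rw [← inv_mul_cancel₀ hc0.ne']
    exact mul_le_mul_of_nonneg_left (hc u hu) (inv_pos.2 hc0).le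
  have hD : ∀ u, HasDerivAt (fun x => -((x + c⁻¹) * hazardSurvival g x)) (D u) u := fun u =>
    (((hasDerivAt_id u).add_const c⁻¹).mul (hasDerivAt hg u)).neg.congr_deriv (by simp only [D, id]; ring)
  have hD_nonneg : ∀ u ∈ Ioi a, 0 ≤ D u := fun u hu => by
    have hu0 : 0 ≤ u := ha.trans hu.out.le
    have hgu : 0 ≤ g u := hc0.le.trans (hc u hu0)
    exact mul_nonneg (by nlinarith [hone u hu0]) (pos u).le
  have hlim : Tendsto (fun x => -((x + c⁻¹) * hazardSurvival g x)) atTop (𝓝 0) := by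
    have h := ((tendsto_rpow_mul_atTop hg hc0 hc 1).add
      ((tendsto_rpow_mul_atTop hg hc0 hc 0).const_mul c⁻¹)).neg
    simpa [add_mul] using h
  have hint : IntegrableOn D (Ioi a) :=
    integrableOn_Ioi_deriv_of_nonneg' (fun u _ => hD u) hD_nonneg hlim
  calc ∫ u in Ioi a, u * (g u * hazardSurvival g u)
      ≤ ∫ u in Ioi a, D u := by
        refine integral_mono_of_nonneg ?_ hint ?_ <;>
          filter_upwards [ae_restrict_mem measurableSet_Ioi] with u hu
        · have hu0 : 0 ≤ u := ha.trans hu.out.le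
          exact mul_nonneg hu0 (mul_nonneg (hc0.le.trans (hc u hu0)) (pos u).le)
        · have := mul_le_mul_of_nonneg_right (hone u (ha.trans hu.out.le)) (pos (g := g) u).le
          simp only [D]
          nlinarith
    _ = (a + c⁻¹) * hazardSurvival g a := by
        simpa using integral_Ioi_of_hasDerivAt_of_nonneg' (fun u _ => hD u) hD_nonneg hlim

end hazardSurvival

theorem stmt13_general (σh2 : ℝ)
    (θε : ℝ → ℝ) (hcont : Continuous θε)
    (hθε : ∀ u : ℝ, 0 ≤ u → 0 < θε u ∧ θε u < σh2)
    (f : ℝ → ℝ)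
    (hf : ∀ u : ℝ, 0 ≤ u → f u = (1 / (σh2 - θε u)) *
      Real.exp (-(∫ s in (0 : ℝ)..u, 1 / (σh2 - θε s)))) :
    ∀ a : ℝ, 0 ≤ a →
      ∫ u in Set.Ioi a, u * f u ≤ (a + σh2) * ∫ u in Set.Ioi a, f u := by
  intro a ha
  -- Clamping at `0` makes the hazard rate continuous on all of `ℝ`.
  set g : ℝ → ℝ := fun s => 1 / (σh2 - θε (max s 0))
  have hden : ∀ s, 0 < σh2 - θε (max s 0) := fun s => sub_pos.2 (hθε _ (le_max_right s 0)).2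
  have hg : Continuous g :=
    continuous_const.div (continuous_const.sub (hcont.comp (continuous_id.max continuous_const)))
      fun s => (hden s).ne'
  have hσ : 0 < σh2 := (hθε 0 le_rfl).1.trans (hθε 0 le_rfl).2
  have hg_ge : ∀ s, 0 ≤ s → σh2⁻¹ ≤ g s := fun s _ => by
    rw [inv_eq_one_div]
    exact one_div_le_one_div_of_le (hden s) (by linarith [(hθε _ (le_max_right s 0)).1])
  have hfg : EqOn f (fun u => g u * hazardSurvival g u) (Ioi a) := fun u hu => by
    have hu0 : 0 ≤ u := ha.trans hu.out.le
    have hint : ∫ s in (0 : ℝ)..u, 1 / (σh2 - θε s) = ∫ s in (0 : ℝ)..u, g s :=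
      intervalIntegral.integral_congr fun s hs => by
        rw [uIcc_of_le hu0] at hs
        simp [g, max_eq_left hs.1]
    rw [hf u hu0, hint]
    simp [hazardSurvival, g, max_eq_left hu0]
  rw [setIntegral_congr_fun measurableSet_Ioi hfg,
    setIntegral_congr_fun measurableSet_Ioi fun u hu => congrArg (u * ·) (hfg hu),
    hazardSurvival.integral_Ioi_mul hg (inv_pos.2 hσ) hg_ge ha]
  simpa using hazardSurvival.setIntegral_Ioi_id_mul_le hg (inv_pos.2 hσ) hg_ge ha

/-- Conditional-mean bound for the steady-state density of the channel estimate: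
∫ₐ^∞ u f(u) du ≤ (a + σ_h²) ∫ₐ^∞ f(u) du. -/
theorem stmt13 (σh2 : ℝ) (hσh : 0 < σh2)
    (θε : ℝ → ℝ) (hcont : Continuous θε)
    (hθε : ∀ u : ℝ, 0 ≤ u → 0 < θε u ∧ θε u < σh2)
    (f : ℝ → ℝ)
    (hf : ∀ u : ℝ, 0 ≤ u → f u = (1 / (σh2 - θε u)) *
      Real.exp (-(∫ s in (0 : ℝ)..u, 1 / (σh2 - θε s)))) :
    ∀ a : ℝ, 0 ≤ a →
      ∫ u in Set.Ioi a, u * f u ≤ (a + σh2) * ∫ u in Set.Ioi a, f u :=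
  stmt13_general σh2 θε hcont hθε f hf
end

section
/- Let σ_h² > 0, let θ_ε : [0, ∞) → ℝ be continuous with 0 < θ_ε(u) < σ_h² for all u ≥ 0, and define f(u) = (1/(σ_h² − θ_ε(u))) · exp(−∫₀ᵘ 1/(σ_h² − θ_ε(s)) ds). Then for every a ≥ 0 and every c > 0, writing q = ∫ₐ^∞ f(u) du, one has ∫ₐ^∞ log(1 + c u) f(u) du ≤ q · log(1 + c (a + σ_h²)). -/
/-
On `[0, ∞)` the density is `f = D · F`, where `D = 1 / (σ_h² - θ_ε) ≥ 1 / σ_h²` is a hazard rate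
and `F = exp (-∫₀ D)` the corresponding survival function, so `F' = -D F`. Hence
`∫ₐ^∞ f = F a`, and since `F u ≤ F a · exp (-(u - a) / σ_h²)`, integration by parts gives
`∫ₐ^∞ (u - a) f u du = ∫ₐ^∞ F ≤ σ_h² F a`: the conditional mean beyond `a` is at most `a + σ_h²`.
Integrating the tangent-line bound of the concave function `log (1 + c ·)` at `a + σ_h²`
against `f` then yields the claim.
-/

open MeasureTheory Filter Topology Set Real

theorem Real.log_le_log_add_sub_div {x y : ℝ} (hx : 0 < x) (hy : 0 < y) :
    log x ≤ log y + (x - y) / y := by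
  have h := log_le_sub_one_of_pos (div_pos hx hy)
  rw [log_div hx.ne' hy.ne', div_sub_one hy.ne'] at h
  linarith

theorem integral_log_one_add_mul_mul_le {μ : Measure ℝ} {p : ℝ → ℝ} {c m : ℝ}
    (hc : 0 ≤ c) (hm : 0 ≤ m) (hu : ∀ᵐ u ∂μ, 0 ≤ u) (hp₀ : ∀ᵐ u ∂μ, 0 ≤ p u)
    (hp : Integrable p μ) (hup : Integrable (fun u => u * p u) μ)
    (hmean : ∫ u, u * p u ∂μ ≤ m * ∫ u, p u ∂μ) :
    ∫ u, log (1 + c * u) * p u ∂μ ≤ (∫ u, p u ∂μ) * log (1 + c * m) := by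
  have hm₁ : 0 < 1 + c * m := by positivity
  set k := c / (1 + c * m)
  have hlog_int : Integrable (fun u => log (1 + c * u) * p u) μ := by
    refine (hup.const_mul c).mono'
      ((measurable_log.comp (by fun_prop)).aestronglyMeasurable.mul hp.aestronglyMeasurable) ?_
    filter_upwards [hu, hp₀] with u hu hpu
    have hlog := log_le_sub_one_of_pos (show 0 < 1 + c * u by positivity)
    rw [Real.norm_eq_abs, abs_of_nonneg (mul_nonneg (log_nonneg (by nlinarith)) hpu)]
    nlinarith
  have htangent : ∀ᵐ u ∂μ, log (1 + c * u) * p u ≤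
      log (1 + c * m) * p u + k * (u * p u - m * p u) := by
    filter_upwards [hu, hp₀] with u hu hpu
    have h := log_le_log_add_sub_div (show 0 < 1 + c * u by positivity) hm₁
    have hk : (1 + c * u - (1 + c * m)) / (1 + c * m) = k * (u - m) := by ring
    rw [hk] at h
    nlinarith
  have hdev : Integrable (fun u => u * p u - m * p u) μ := hup.sub (hp.const_mul m)
  calc ∫ u, log (1 + c * u) * p u ∂μ
      ≤ ∫ u, log (1 + c * m) * p u + k * (u * p u - m * p u) ∂μ :=
        integral_mono_ae hlog_int ((hp.const_mul _).add (hdev.const_mul k)) htangent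
    _ = log (1 + c * m) * ∫ u, p u ∂μ + k * (∫ u, u * p u ∂μ - m * ∫ u, p u ∂μ) := by
        rw [integral_add (hp.const_mul _) (hdev.const_mul k), integral_const_mul,
          integral_const_mul, integral_sub hup (hp.const_mul m), integral_const_mul]
    _ ≤ (∫ u, p u ∂μ) * log (1 + c * m) := by
        nlinarith [mul_nonpos_of_nonneg_of_nonpos (div_nonneg hc hm₁.le) (sub_nonpos.2 hmean)]

theorem exp_neg_mul_sub_eq (κ a u : ℝ) : exp (-(κ * (u - a))) = exp (κ * a) * exp (-κ * u) := by
  rw [← exp_add]; ring_nf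

theorem integrableOn_exp_neg_mul_sub_Ioi {κ : ℝ} (hκ₀ : 0 < κ) (a : ℝ) :
    IntegrableOn (fun u => exp (-(κ * (u - a)))) (Ioi a) := by
  simp_rw [exp_neg_mul_sub_eq κ a]
  exact (integrableOn_exp_mul_Ioi (neg_lt_zero.2 hκ₀) a).const_mul _

theorem integral_exp_neg_mul_sub_Ioi {κ : ℝ} (hκ₀ : 0 < κ) (a : ℝ) :
    ∫ u in Ioi a, exp (-(κ * (u - a))) = κ⁻¹ := by
  simp_rw [exp_neg_mul_sub_eq κ a]
  rw [integral_const_mul, integral_exp_mul_Ioi (neg_lt_zero.2 hκ₀), neg_div_neg_eq,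
    ← mul_div_assoc, ← exp_add, neg_mul, add_neg_cancel, exp_zero, one_div]

noncomputable def survival (D : ℝ → ℝ) (u : ℝ) : ℝ := exp (-∫ s in (0 : ℝ)..u, D s)

namespace survival

variable {D : ℝ → ℝ} {κ a : ℝ}

theorem pos (u : ℝ) : 0 < survival D u := exp_pos _

theorem hasDerivAt (hD : Continuous D) (u : ℝ) :
    HasDerivAt (survival D) (-(D u * survival D u)) u := by
  have hint : HasDerivAt (fun u => ∫ s in (0 : ℝ)..u, D s) (D u) u :=
    intervalIntegral.integral_hasDerivAt_right (hD.intervalIntegrable 0 u)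
      (hD.stronglyMeasurableAtFilter _ _) hD.continuousAt
  rw [show -(D u * survival D u) = survival D u * -D u by ring]
  exact hint.neg.exp

theorem continuous (hD : Continuous D) : Continuous (survival D) :=
  continuous_iff_continuousAt.2 fun u => (hasDerivAt hD u).continuousAt

theorem le_mul_exp (hD : Continuous D) (hκ : ∀ s, κ ≤ D s) {u : ℝ} (hau : a ≤ u) :
    survival D u ≤ survival D a * exp (-(κ * (u - a))) := by
  have hgrowth : κ * (u - a) ≤ (∫ s in (0 : ℝ)..u, D s) - ∫ s in (0 : ℝ)..a, D s := by
    rw [intervalIntegral.integral_interval_sub_left (hD.intervalIntegrable 0 u)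
      (hD.intervalIntegrable 0 a)]
    calc κ * (u - a) = ∫ _ in a..u, κ := by simp [mul_comm]
      _ ≤ ∫ s in a..u, D s := intervalIntegral.integral_mono_on hau
          intervalIntegrable_const (hD.intervalIntegrable a u) fun s _ => hκ s
  rw [survival, survival, ← exp_add]
  exact exp_le_exp.2 (by linarith)

theorem tendsto_pow_mul_atTop (hD : Continuous D) (hκ₀ : 0 < κ) (hκ : ∀ s, κ ≤ D s) (n : ℕ) :
    Tendsto (fun u => (u - a) ^ n * survival D u) atTop (𝓝 0) := by
  have hlin : Tendsto (fun u => κ * (u - a)) atTop atTop :=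
    (tendsto_atTop_add_const_right _ (-a) tendsto_id).const_mul_atTop hκ₀
  have hbound : Tendsto (fun u => survival D a * (κ⁻¹) ^ n *
      ((κ * (u - a)) ^ n * exp (-(κ * (u - a))))) atTop (𝓝 0) := by
    simpa using ((tendsto_pow_mul_exp_neg_atTop_nhds_zero n).comp hlin).const_mul
      (survival D a * (κ⁻¹) ^ n)
  refine squeeze_zero' ?_ ?_ hbound
  · filter_upwards [eventually_ge_atTop a] with u hu
    exact mul_nonneg (pow_nonneg (sub_nonneg.2 hu) n) (pos u).le
  · filter_upwards [eventually_ge_atTop a] with u hu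
    calc (u - a) ^ n * survival D u
        ≤ (u - a) ^ n * (survival D a * exp (-(κ * (u - a)))) :=
          mul_le_mul_of_nonneg_left (le_mul_exp hD hκ hu) (pow_nonneg (sub_nonneg.2 hu) n)
      _ = _ := by rw [mul_pow, inv_pow, ← mul_assoc, mul_comm]; field_simp

theorem tendsto_atTop (hD : Continuous D) (hκ₀ : 0 < κ) (hκ : ∀ s, κ ≤ D s) :
    Tendsto (survival D) atTop (𝓝 0) := by
  simpa using tendsto_pow_mul_atTop (a := 0) hD hκ₀ hκ 0

theorem integrableOn_Ioi (hD : Continuous D) (hκ₀ : 0 < κ) (hκ : ∀ s, κ ≤ D s) :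
    IntegrableOn (survival D) (Ioi a) :=
  ((integrableOn_exp_neg_mul_sub_Ioi hκ₀ a).const_mul (survival D a)).mono'
    (continuous hD).aestronglyMeasurable.restrict <|
      ae_restrict_of_forall_mem measurableSet_Ioi fun u hu => by
        rw [Real.norm_eq_abs, abs_of_pos (pos u)]
        exact le_mul_exp hD hκ (le_of_lt hu)

theorem integral_Ioi_le (hD : Continuous D) (hκ₀ : 0 < κ) (hκ : ∀ s, κ ≤ D s) :
    ∫ u in Ioi a, survival D u ≤ κ⁻¹ * survival D a := by
  calc ∫ u in Ioi a, survival D u ≤ ∫ u in Ioi a, survival D a * exp (-(κ * (u - a))) :=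
        setIntegral_mono_on (integrableOn_Ioi hD hκ₀ hκ)
          ((integrableOn_exp_neg_mul_sub_Ioi hκ₀ a).const_mul _) measurableSet_Ioi
          fun u hu => le_mul_exp hD hκ (le_of_lt hu)
    _ = κ⁻¹ * survival D a := by
        rw [integral_const_mul, integral_exp_neg_mul_sub_Ioi hκ₀, mul_comm]

theorem hazard_mul_nonneg (hκ₀ : 0 < κ) (hκ : ∀ s, κ ≤ D s) (u : ℝ) :
    0 ≤ D u * survival D u :=
  mul_nonneg (hκ₀.le.trans (hκ u)) (pos u).le

theorem hasDerivAt_neg (hD : Continuous D) (u : ℝ) :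
    HasDerivAt (fun u => -survival D u) (D u * survival D u) u := by
  simpa using (hasDerivAt hD u).fun_neg

theorem integrableOn_hazard_mul_Ioi (hD : Continuous D) (hκ₀ : 0 < κ) (hκ : ∀ s, κ ≤ D s) :
    IntegrableOn (fun u => D u * survival D u) (Ioi a) :=
  integrableOn_Ioi_deriv_of_nonneg' (fun u _ => hasDerivAt_neg hD u)
    (fun u _ => hazard_mul_nonneg hκ₀ hκ u)
    (by simpa using (tendsto_atTop hD hκ₀ hκ).neg)

theorem integral_hazard_mul_Ioi (hD : Continuous D) (hκ₀ : 0 < κ) (hκ : ∀ s, κ ≤ D s) :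
    ∫ u in Ioi a, D u * survival D u = survival D a := by
  rw [integral_Ioi_of_hasDerivAt_of_nonneg' (fun u _ => hasDerivAt_neg hD u)
    (fun u _ => hazard_mul_nonneg hκ₀ hκ u) (tendsto_atTop hD hκ₀ hκ).neg]
  ring

theorem hasDerivAt_integral_sub_mul (hD : Continuous D) (u : ℝ) :
    HasDerivAt (fun u => (∫ s in a..u, survival D s) - (u - a) * survival D u)
      ((u - a) * (D u * survival D u)) u := by
  have hF := continuous hD
  have hint : HasDerivAt (fun u => ∫ s in a..u, survival D s) (survival D u) u :=
    intervalIntegral.integral_hasDerivAt_right (hF.intervalIntegrable a u)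
      (hF.stronglyMeasurableAtFilter _ _) hF.continuousAt
  exact (hint.fun_sub (((hasDerivAt_id' u).sub_const a).fun_mul (hasDerivAt hD u))).congr_deriv
    (by ring)

theorem tendsto_integral_sub_mul (hD : Continuous D) (hκ₀ : 0 < κ) (hκ : ∀ s, κ ≤ D s) :
    Tendsto (fun u => (∫ s in a..u, survival D s) - (u - a) * survival D u) atTop
      (𝓝 (∫ u in Ioi a, survival D u)) := by
  have h := (intervalIntegral_tendsto_integral_Ioi a (integrableOn_Ioi hD hκ₀ hκ)
    tendsto_id).sub (by simpa only [pow_one] using tendsto_pow_mul_atTop (a := a) hD hκ₀ hκ 1)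
  rwa [sub_zero] at h

theorem integrableOn_sub_mul_hazard_mul_Ioi (hD : Continuous D) (hκ₀ : 0 < κ)
    (hκ : ∀ s, κ ≤ D s) : IntegrableOn (fun u => (u - a) * (D u * survival D u)) (Ioi a) :=
  integrableOn_Ioi_deriv_of_nonneg' (fun u _ => hasDerivAt_integral_sub_mul hD u)
    (fun u hu => mul_nonneg (sub_nonneg.2 (le_of_lt hu)) (hazard_mul_nonneg hκ₀ hκ u))
    (tendsto_integral_sub_mul hD hκ₀ hκ)

theorem integral_sub_mul_hazard_mul_Ioi (hD : Continuous D) (hκ₀ : 0 < κ) (hκ : ∀ s, κ ≤ D s) :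
    ∫ u in Ioi a, (u - a) * (D u * survival D u) = ∫ u in Ioi a, survival D u := by
  rw [integral_Ioi_of_hasDerivAt_of_nonneg' (fun u _ => hasDerivAt_integral_sub_mul hD u)
    (fun u hu => mul_nonneg (sub_nonneg.2 (le_of_lt hu)) (hazard_mul_nonneg hκ₀ hκ u))
    (tendsto_integral_sub_mul hD hκ₀ hκ)]
  simp

theorem integrableOn_mul_hazard_mul_Ioi (hD : Continuous D) (hκ₀ : 0 < κ) (hκ : ∀ s, κ ≤ D s) :
    IntegrableOn (fun u => u * (D u * survival D u)) (Ioi a) :=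
  ((integrableOn_sub_mul_hazard_mul_Ioi hD hκ₀ hκ).add
    ((integrableOn_hazard_mul_Ioi hD hκ₀ hκ).const_mul a)).congr_fun
      (fun u _ => by simp only [Pi.add_apply]; ring) measurableSet_Ioi

theorem integral_mul_hazard_mul_Ioi_le (hD : Continuous D) (hκ₀ : 0 < κ) (hκ : ∀ s, κ ≤ D s) :
    ∫ u in Ioi a, u * (D u * survival D u) ≤ (a + κ⁻¹) * ∫ u in Ioi a, D u * survival D u := by
  have hsplit : ∫ u in Ioi a, u * (D u * survival D u) =
      (∫ u in Ioi a, (u - a) * (D u * survival D u)) + a * ∫ u in Ioi a, D u * survival D u := by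
    rw [← integral_const_mul, ← integral_add (integrableOn_sub_mul_hazard_mul_Ioi hD hκ₀ hκ)
      ((integrableOn_hazard_mul_Ioi hD hκ₀ hκ).const_mul a)]
    congr 1 with u
    ring
  rw [hsplit, integral_sub_mul_hazard_mul_Ioi hD hκ₀ hκ, integral_hazard_mul_Ioi hD hκ₀ hκ]
  linarith [integral_Ioi_le (a := a) hD hκ₀ hκ]

end survival

/-- Jensen-type upper bound on the on-off achievable rate:
∫ₐ^∞ log(1 + cu) f(u) du ≤ q log(1 + c(a + σ_h²)), where q = ∫ₐ^∞ f(u) du and f is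
the steady-state density of the channel estimate. -/
theorem stmt18 (σh2 : ℝ) (hσh : 0 < σh2)
    (θε : ℝ → ℝ) (hcont : Continuous θε)
    (hθε : ∀ u : ℝ, 0 ≤ u → 0 < θε u ∧ θε u < σh2)
    (f : ℝ → ℝ)
    (hf : ∀ u : ℝ, 0 ≤ u → f u = (1 / (σh2 - θε u)) *
      Real.exp (-(∫ s in (0 : ℝ)..u, 1 / (σh2 - θε s)))) :
    ∀ a : ℝ, 0 ≤ a → ∀ c : ℝ, 0 < c →
      ∫ u in Set.Ioi a, Real.log (1 + c * u) * f u ≤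
        (∫ u in Set.Ioi a, f u) * Real.log (1 + c * (a + σh2)) := by
  intro a ha c hc
  -- the hazard rate of `f`, frozen at its value at `0` on the negative axis
  set D : ℝ → ℝ := fun s => (σh2 - θε (max s 0))⁻¹
  have hgap : ∀ s, 0 < σh2 - θε (max s 0) := fun s => sub_pos.2 (hθε _ (le_max_right s 0)).2
  have hD : Continuous D := (continuous_const.sub (hcont.comp
    (continuous_id.max continuous_const))).inv₀ fun s => (hgap s).ne'
  have hκ : ∀ s, σh2⁻¹ ≤ D s := fun s =>
    inv_anti₀ (hgap s) (sub_le_self _ (hθε _ (le_max_right s 0)).1.le)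
  have hκ₀ : 0 < σh2⁻¹ := inv_pos.2 hσh
  have hf_eq : EqOn f (fun u => D u * survival D u) (Ioi a) := fun u hu => by
    have hu : 0 ≤ u := ha.trans hu.out.le
    have hint : ∫ s in (0 : ℝ)..u, 1 / (σh2 - θε s) = ∫ s in (0 : ℝ)..u, D s :=
      intervalIntegral.integral_congr fun s hs => by
        simp [D, max_eq_left (Set.uIcc_of_le hu ▸ hs).1]
    show f u = D u * survival D u
    rw [hf u hu, hint, survival, one_div]
    simp only [D, max_eq_left hu]
  rw [setIntegral_congr_fun measurableSet_Ioi hf_eq, setIntegral_congr_fun measurableSet_Ioi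
    fun u hu => congrArg (log (1 + c * u) * ·) (hf_eq hu)]
  refine integral_log_one_add_mul_mul_le hc.le (by positivity)
    (ae_restrict_of_forall_mem measurableSet_Ioi fun u hu => ha.trans hu.out.le)
    (ae_restrict_of_forall_mem measurableSet_Ioi fun u _ => survival.hazard_mul_nonneg hκ₀ hκ u)
    (survival.integrableOn_hazard_mul_Ioi hD hκ₀ hκ)
    (survival.integrableOn_mul_hazard_mul_Ioi hD hκ₀ hκ) ?_
  simpa using survival.integral_mul_hazard_mul_Ioi_le hD hκ₀ hκ
end

section
/- Let ρ > 0, σ_z² > 0, σ_h² > 0 and ε_max > 0, set γ = ε_max/(ρ σ_z²) and θ* = (√(1 + 2 σ_h² γ) − 1)/γ. Let θ : [0, ∞) → ℝ be differentiable and satisfy θ'(t) ≥ 2ρ(σ_h² − θ(t)) − ε_max θ(t)²/σ_z² for all t ≥ 0. If θ(0) ≥ θ*, then θ(t) ≥ θ* for all t ≥ 0. -/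
/-!
Write the right-hand side as `f θ = 2ρ(σ_h² − θ) − ε_max θ²/σ_z²`. The value `θ*` is a root of
this quadratic, so `f θ = (θ* − θ) g` with `g` affine in `θ`; along the trajectory, `u = θ − θ*`
therefore satisfies the linear differential inequality `u' ≥ −g(t) u` with `g` continuous. With the
integrating factor `exp (∫₀ᵗ g)`, the product `u · exp (∫₀ᵗ g)` is nondecreasing, so `u` stays
nonnegative once it starts nonnegative.
-/

open Real Set

lemma monotoneOn_mul_exp_integral {u g : ℝ → ℝ} {a : ℝ} (hu : Differentiable ℝ u)
    (hg : Continuous g) (hineq : ∀ t, a ≤ t → -(g t * u t) ≤ deriv u t) :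
    MonotoneOn (fun t => u t * exp (∫ s in a..t, g s)) (Ici a) := by
  have hderiv : ∀ t, HasDerivAt (fun t => u t * exp (∫ s in a..t, g s))
      (deriv u t * exp (∫ s in a..t, g s) + u t * (exp (∫ s in a..t, g s) * g t)) t :=
    fun t => (hu t).hasDerivAt.mul (hg.integral_hasStrictDerivAt a t).hasDerivAt.exp
  have hdiff : Differentiable ℝ (fun t => u t * exp (∫ s in a..t, g s)) :=
    fun t => (hderiv t).differentiableAt
  refine monotoneOn_of_deriv_nonneg (convex_Ici a) hdiff.continuous.continuousOn
    hdiff.differentiableOn fun t ht => ?_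
  rw [interior_Ici] at ht
  rw [(hderiv t).deriv]
  have hsum : 0 ≤ deriv u t + g t * u t := by linarith [hineq t (le_of_lt ht)]
  calc (0 : ℝ) ≤ (deriv u t + g t * u t) * exp (∫ s in a..t, g s) := by positivity
    _ = _ := by ring

lemma nonneg_of_neg_mul_le_deriv {u g : ℝ → ℝ} {a : ℝ} (hu : Differentiable ℝ u)
    (hg : Continuous g) (hineq : ∀ t, a ≤ t → -(g t * u t) ≤ deriv u t) (ha : 0 ≤ u a) :
    ∀ t, a ≤ t → 0 ≤ u t := by
  intro t ht
  have hmono := monotoneOn_mul_exp_integral hu hg hineq self_mem_Ici ht ht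
  simp only [intervalIntegral.integral_same, exp_zero, mul_one] at hmono
  exact nonneg_of_mul_nonneg_left (ha.trans hmono) (exp_pos _)

lemma quadratic_eq_mul_of_root {a b c x₀ : ℝ} (h : c - b * x₀ - a * x₀ ^ 2 = 0) (x : ℝ) :
    c - b * x - a * x ^ 2 = (x₀ - x) * (a * (x + x₀) + b) := by
  linear_combination h

lemma steady_state_isRoot {ρ σz2 σh2 εmax γ : ℝ} (hσz : σz2 ≠ 0) (hγ : γ ≠ 0)
    (hεmax : εmax = γ * ρ * σz2) (hdisc : 0 ≤ 1 + 2 * σh2 * γ) :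
    2 * ρ * σh2 - 2 * ρ * ((√(1 + 2 * σh2 * γ) - 1) / γ)
      - εmax / σz2 * ((√(1 + 2 * σh2 * γ) - 1) / γ) ^ 2 = 0 := by
  have hsq : √(1 + 2 * σh2 * γ) ^ 2 = 1 + 2 * σh2 * γ := sq_sqrt hdisc
  rw [hεmax]
  field_simp
  linear_combination (-ρ) * hsq

/-- Invariance of {θ ≥ θ*}: if the estimation error variance satisfies the
differential inequality θ'(t) ≥ 2ρ(σ_h² − θ) − ε_max θ²/σ_z² and starts at or
above the full-power steady state θ*, it stays at or above θ* forever. -/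
theorem stmt19 (ρ σz2 σh2 εmax γ θstar : ℝ)
    (hρ : 0 < ρ) (hσz : 0 < σz2) (hσh : 0 < σh2) (hεmax : 0 < εmax)
    (hγ : γ = εmax / (ρ * σz2))
    (hθstar : θstar = (Real.sqrt (1 + 2 * σh2 * γ) - 1) / γ)
    (θ : ℝ → ℝ) (hdiff : Differentiable ℝ θ)
    (hineq : ∀ t : ℝ, 0 ≤ t →
      2 * ρ * (σh2 - θ t) - εmax * (θ t) ^ 2 / σz2 ≤ deriv θ t)
    (h0 : θstar ≤ θ 0) :
    ∀ t : ℝ, 0 ≤ t → θstar ≤ θ t := by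
  have hγpos : 0 < γ := by rw [hγ]; positivity
  have hεmax_eq : εmax = γ * ρ * σz2 := by rw [hγ]; field_simp
  have hroot : 2 * ρ * σh2 - 2 * ρ * θstar - εmax / σz2 * θstar ^ 2 = 0 := by
    rw [hθstar]
    exact steady_state_isRoot hσz.ne' hγpos.ne' hεmax_eq (by positivity)
  set g : ℝ → ℝ := fun t => εmax / σz2 * (θ t + θstar) + 2 * ρ
  have hg : Continuous g := by have := hdiff.continuous; fun_prop
  have hlinear : ∀ t, 0 ≤ t → -(g t * (θ t - θstar)) ≤ deriv (fun s => θ s - θstar) t := by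
    intro t ht
    have hfactor := quadratic_eq_mul_of_root hroot (θ t)
    rw [deriv_sub_const]
    calc -(g t * (θ t - θstar)) = 2 * ρ * (σh2 - θ t) - εmax * θ t ^ 2 / σz2 := by
          simp only [g]; linear_combination -hfactor
      _ ≤ deriv θ t := hineq t ht
  intro t ht
  have := nonneg_of_neg_mul_le_deriv (hdiff.sub_const θstar) hg hlinear (sub_nonneg.2 h0) t ht
  linarith
end
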